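/- Under Assumption 2 (strong exogeneity), the three terms of the short-regression decomposition simplify to Δ_sel^s = 0, Δ_dce^s = Σ_{a∈𝒜} π_1(a)·(μ(1,a)−μ(0,a)), and Δ_ind^s = Σ_{a∈𝒜} (π_1(a)−π_0(a))·(μ(0,a)−μ(0,0)); consequently Δ_short = Σ_{a∈𝒜} π_1(a)·(μ(1,a)−μ(0,a)) + Σ_{a∈𝒜} (π_1(a)−π_0(a))·(μ(0,a)−μ(0,0)). -/

import Mathlib

open MeasureTheory ProbabilityTheory BigOperators

noncomputable section

variable {Ω : Type} [MeasurableSpace Ω] {K : ℕ}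

/-- Expectation of a real-valued random variable. -/
def Exp (P : Measure Ω) (Z : Ω → ℝ) : ℝ := ∫ ω, Z ω ∂P

/-- Probability of an event, as a real number. -/
def Pr (P : Measure Ω) (s : Set Ω) : ℝ := (P s).toReal

/-- Conditional expectation given an event, defined as a ratio. -/
def CE (P : Measure Ω) (Z : Ω → ℝ) (s : Set Ω) : ℝ :=
  Exp P (fun ω => Z ω * s.indicator (fun _ => (1:ℝ)) ω) / Pr P s

/-- Covariance of two real-valued random variables. -/
def Cov (P : Measure Ω) (Z W : Ω → ℝ) : ℝ :=
  Exp P (fun ω => Z ω * W ω) - Exp P Z * Exp P W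

/-- The event {D = d, A = a}. -/
def evDA (D : Ω → ℕ) (A : Ω → Fin K → ℕ) (d : ℕ) (a : Fin K → ℕ) : Set Ω :=
  {ω | D ω = d ∧ A ω = a}

/-- The event {D = d}. -/
def evD (D : Ω → ℕ) (d : ℕ) : Set Ω := {ω | D ω = d}

/-- The event {A = a}. -/
def evA (A : Ω → Fin K → ℕ) (a : Fin K → ℕ) : Set Ω := {ω | A ω = a}

/-- π_d(a) = P(A = a | D = d). -/
def piP (P : Measure Ω) (D : Ω → ℕ) (A : Ω → Fin K → ℕ) (d : ℕ) (a : Fin K → ℕ) : ℝ :=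
  Pr P (evDA D A d a) / Pr P (evD D d)

/-- The observed outcome Y = Σ_{(d,a)} Y(d,a)·1{D=d, A=a}. -/
def Yobs (D : Ω → ℕ) (A : Ω → Fin K → ℕ) (𝒜 : Finset (Fin K → ℕ))
    (Ypot : ℕ → (Fin K → ℕ) → Ω → ℝ) : Ω → ℝ :=
  fun ω => ∑ d ∈ ({0, 1} : Finset ℕ), ∑ a ∈ 𝒜,
    Ypot d a ω * (if D ω = d ∧ A ω = a then (1:ℝ) else 0)

/-- μ(d,a) = E[Y(d,a)]. -/
def muP (P : Measure Ω) (Ypot : ℕ → (Fin K → ℕ) → Ω → ℝ) (d : ℕ) (a : Fin K → ℕ) : ℝ :=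
  Exp P (Ypot d a)

/-- The random vector (D, A) as a real-valued family indexed by Unit ⊕ Fin K. -/
def DAvec (D : Ω → ℕ) (A : Ω → Fin K → ℕ) : Unit ⊕ Fin K → Ω → ℝ :=
  Sum.elim (fun _ ω => (D ω : ℝ)) (fun j ω => (A ω j : ℝ))

/-- The (K+1)×(K+1) covariance matrix of (D, A). -/
def covDAmat (P : Measure Ω) (D : Ω → ℕ) (A : Ω → Fin K → ℕ) :
    Matrix (Unit ⊕ Fin K) (Unit ⊕ Fin K) ℝ :=
  Matrix.of fun i j => Cov P (DAvec D A i) (DAvec D A j)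

/-- The K×K covariance matrix Var(A). -/
def varAmat (P : Measure Ω) (A : Ω → Fin K → ℕ) : Matrix (Fin K) (Fin K) ℝ :=
  Matrix.of fun i j => Cov P (fun ω => (A ω i : ℝ)) (fun ω => (A ω j : ℝ))

/-- The row vector Cov(D, A). -/
def covDA (P : Measure Ω) (D : Ω → ℕ) (A : Ω → Fin K → ℕ) : Fin K → ℝ :=
  fun j => Cov P (fun ω => (D ω : ℝ)) (fun ω => (A ω j : ℝ))

/-- M = Cov(D,A) ⬝ Var(A)⁻¹. -/
def Mlong (P : Measure Ω) (D : Ω → ℕ) (A : Ω → Fin K → ℕ) : Fin K → ℝ :=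
  fun j => ∑ i, covDA P D A i * (varAmat P A)⁻¹ i j

/-- Var(D). -/
def varD (P : Measure Ω) (D : Ω → ℕ) : ℝ :=
  Cov P (fun ω => (D ω : ℝ)) (fun ω => (D ω : ℝ))

/-- denom = Var(D) − Cov(D,A)·Var(A)⁻¹·Cov(A,D). -/
def denomL (P : Measure Ω) (D : Ω → ℕ) (A : Ω → Fin K → ℕ) : ℝ :=
  varD P D - ∑ j, Mlong P D A j * covDA P D A j

/-- The long-regression weight ω_dce^l(a). -/
def wdceL (P : Measure Ω) (D : Ω → ℕ) (A : Ω → Fin K → ℕ) (a : Fin K → ℕ) : ℝ :=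
  piP P D A 1 a *
    (varD P D - Pr P (evD D 1) *
      ∑ j, Mlong P D A j * ((a j : ℝ) - Exp P (fun ω => (A ω j : ℝ)))) / denomL P D A

/-- The long-regression weight ω_ind^l(a). -/
def windL (P : Measure Ω) (D : Ω → ℕ) (A : Ω → Fin K → ℕ) (a : Fin K → ℕ) : ℝ :=
  (varD P D * (piP P D A 1 a - piP P D A 0 a) -
    Pr P (evA A a) * ∑ j, Mlong P D A j * ((a j : ℝ) - Exp P (fun ω => (A ω j : ℝ))))
  / denomL P D A

/-- The residual of the long regression of Y on (1, D, A). -/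
def residLong (D : Ω → ℕ) (A : Ω → Fin K → ℕ) (𝒜 : Finset (Fin K → ℕ))
    (Ypot : ℕ → (Fin K → ℕ) → Ω → ℝ) (Δ θ₀ : ℝ) (θ : Fin K → ℝ) : Ω → ℝ :=
  fun ω => Yobs D A 𝒜 Ypot ω - Δ * (D ω : ℝ) - θ₀ - ∑ j, θ j * (A ω j : ℝ)

/-- The random vector W = (A, A·D) as a real-valued family indexed by Fin K ⊕ Fin K. -/
def Wvec (D : Ω → ℕ) (A : Ω → Fin K → ℕ) : Fin K ⊕ Fin K → Ω → ℝ :=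
  Sum.elim (fun j ω => (A ω j : ℝ)) (fun j ω => (A ω j : ℝ) * (D ω : ℝ))

/-- The 2K×2K covariance matrix Var(W), W = (A, AD). -/
def varWmat (P : Measure Ω) (D : Ω → ℕ) (A : Ω → Fin K → ℕ) :
    Matrix (Fin K ⊕ Fin K) (Fin K ⊕ Fin K) ℝ :=
  Matrix.of fun u v => Cov P (Wvec D A u) (Wvec D A v)

/-- The row vector Cov(D, W). -/
def covDW (P : Measure Ω) (D : Ω → ℕ) (A : Ω → Fin K → ℕ) : Fin K ⊕ Fin K → ℝ :=
  fun u => Cov P (fun ω => (D ω : ℝ)) (Wvec D A u)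

/-- M = Cov(D,W) ⬝ Var(W)⁻¹ for the interaction regression. -/
def Minter (P : Measure Ω) (D : Ω → ℕ) (A : Ω → Fin K → ℕ) : Fin K ⊕ Fin K → ℝ :=
  fun v => ∑ u, covDW P D A u * (varWmat P D A)⁻¹ u v

/-- denom = Var(D) − M·Cov(W,D) for the interaction regression. -/
def denomI (P : Measure Ω) (D : Ω → ℕ) (A : Ω → Fin K → ℕ) : ℝ :=
  varD P D - ∑ v, Minter P D A v * covDW P D A v

/-- E[A_j | D = 1]. -/
def condA1 (P : Measure Ω) (D : Ω → ℕ) (A : Ω → Fin K → ℕ) (j : Fin K) : ℝ :=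
  CE P (fun ω => (A ω j : ℝ)) (evD D 1)

/-- The random vector (D, A, AD) as a real-valued family. -/
def DADvec (D : Ω → ℕ) (A : Ω → Fin K → ℕ) : Unit ⊕ (Fin K ⊕ Fin K) → Ω → ℝ :=
  Sum.elim (fun _ ω => (D ω : ℝ)) (Wvec D A)

/-- The (2K+1)×(2K+1) covariance matrix of (D, A, AD). -/
def covDADmat (P : Measure Ω) (D : Ω → ℕ) (A : Ω → Fin K → ℕ) :
    Matrix (Unit ⊕ (Fin K ⊕ Fin K)) (Unit ⊕ (Fin K ⊕ Fin K)) ℝ :=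
  Matrix.of fun i j => Cov P (DADvec D A i) (DADvec D A j)

/-- The interaction-regression weight ω_dce^i(a). -/
def wdceI (P : Measure Ω) (D : Ω → ℕ) (A : Ω → Fin K → ℕ) (a : Fin K → ℕ) : ℝ :=
  piP P D A 1 a *
    (varD P D
      - Pr P (evD D 1) *
          ∑ j, Minter P D A (Sum.inl j) * ((a j : ℝ) - Exp P (fun ω => (A ω j : ℝ)))
      - Pr P (evD D 1) *
          ∑ j, Minter P D A (Sum.inr j) * ((a j : ℝ) - Pr P (evD D 1) * condA1 P D A j))
  / denomI P D A

/-- The interaction-regression weight ω_ind^i(a). -/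
def windI (P : Measure Ω) (D : Ω → ℕ) (A : Ω → Fin K → ℕ) (a : Fin K → ℕ) : ℝ :=
  (varD P D * (piP P D A 1 a - piP P D A 0 a)
    - ∑ j, Minter P D A (Sum.inl j) * Pr P (evA A a) * ((a j : ℝ) - Exp P (fun ω => (A ω j : ℝ)))
    - Pr P (evD D 1) *
        ∑ j, Minter P D A (Sum.inr j) *
          (piP P D A 1 a * (a j : ℝ) - Pr P (evA A a) * condA1 P D A j))
  / denomI P D A

/-- The residual of the interaction regression of Y on (1, D, A, AD). -/
def residInter (D : Ω → ℕ) (A : Ω → Fin K → ℕ) (𝒜 : Finset (Fin K → ℕ))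
    (Ypot : ℕ → (Fin K → ℕ) → Ω → ℝ) (Δ θ₀ : ℝ) (θ lam : Fin K → ℝ) : Ω → ℝ :=
  fun ω => Yobs D A 𝒜 Ypot ω - Δ * (D ω : ℝ) - θ₀ - (∑ j, θ j * (A ω j : ℝ))
    - ∑ j, lam j * (A ω j : ℝ) * (D ω : ℝ)

/-- P(D = d | A = a). -/
def condDgivenA (P : Measure Ω) (D : Ω → ℕ) (A : Ω → Fin K → ℕ) (d : ℕ) (a : Fin K → ℕ) : ℝ :=
  Pr P (evDA D A d a) / Pr P (evA A a)

/-- The SFE weight ω_sfe(a). -/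
def wsfe (P : Measure Ω) (D : Ω → ℕ) (A : Ω → Fin K → ℕ) (𝒜 : Finset (Fin K → ℕ))
    (a : Fin K → ℕ) : ℝ :=
  condDgivenA P D A 1 a * condDgivenA P D A 0 a * Pr P (evA A a) /
    ∑ a' ∈ 𝒜, condDgivenA P D A 1 a' * condDgivenA P D A 0 a' * Pr P (evA A a')

/-- The residual of the SFE regression of Y on (D, {1{A=a}}). -/
def residSFE (D : Ω → ℕ) (A : Ω → Fin K → ℕ) (𝒜 : Finset (Fin K → ℕ))
    (Ypot : ℕ → (Fin K → ℕ) → Ω → ℝ) (Δ : ℝ) (θ : (Fin K → ℕ) → ℝ) : Ω → ℝ :=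
  fun ω => Yobs D A 𝒜 Ypot ω - Δ * (D ω : ℝ) -
    ∑ a ∈ 𝒜, θ a * (if A ω = a then (1:ℝ) else 0)

/-- The residual of the saturated regression of Y on ({1{A=a}}, {D·1{A=a}}). -/
def residSAT (D : Ω → ℕ) (A : Ω → Fin K → ℕ) (𝒜 : Finset (Fin K → ℕ))
    (Ypot : ℕ → (Fin K → ℕ) → Ω → ℝ) (γ Δsat : (Fin K → ℕ) → ℝ) : Ω → ℝ :=
  fun ω => Yobs D A 𝒜 Ypot ω - (∑ a ∈ 𝒜, γ a * (if A ω = a then (1:ℝ) else 0)) -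
    ∑ a ∈ 𝒜, Δsat a * (D ω : ℝ) * (if A ω = a then (1:ℝ) else 0)

/-! Strong exogeneity makes each potential outcome `Y(d', a)` independent of the indicator of
the cell `{D = d, A = a}`, so every cell mean `E[Y(d', a) | D = d, A = a]` equals `μ(d', a)`.
The decomposition of `Δ_short` then follows from the law of total expectation
`E[Y | D = d] = Σ_a π_d(a) E[Y(d, a) | D = d, A = a]` and `Σ_a π_1(a) = Σ_a π_0(a) = 1`. -/

open Finset

lemma Finset.sum_mul_sub_sum_mul_eq_add {ι R : Type*} [CommRing R] (s : Finset ι)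
    {p q f g : ι → R} (c : R) (hpq : ∑ i ∈ s, p i = ∑ i ∈ s, q i) :
    ∑ i ∈ s, p i * f i - ∑ i ∈ s, q i * g i
      = ∑ i ∈ s, p i * (f i - g i) + ∑ i ∈ s, (p i - q i) * (g i - c) := by
  have hc : ∑ i ∈ s, (p i - q i) * c = 0 := by
    rw [← sum_mul, sum_sub_distrib, hpq, sub_self, zero_mul]
  simp only [mul_sub, sub_mul, sum_sub_distrib] at hc ⊢
  linear_combination hc

section Conditioning

variable {P : Measure Ω}

lemma Pr_eq_measureReal (s : Set Ω) : Pr P s = P.real s := rfl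

lemma CE_eq_setIntegral_div (Z : Ω → ℝ) {s : Set Ω} (hs : MeasurableSet s) :
    CE P Z s = (∫ ω in s, Z ω ∂P) / P.real s := by
  rw [CE, Exp, ← integral_indicator hs, Pr_eq_measureReal]
  congr 2 with ω
  by_cases h : ω ∈ s <;> simp [h]

lemma CE_sub {Z W : Ω → ℝ} (hZ : Integrable Z P) (hW : Integrable W P) {s : Set Ω}
    (hs : MeasurableSet s) : CE P (fun ω => Z ω - W ω) s = CE P Z s - CE P W s := by
  simp only [CE_eq_setIntegral_div _ hs, integral_sub hZ.integrableOn hW.integrableOn, sub_div]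

lemma CE_preimage_eq_Exp_of_indepFun {β : Type*} [MeasurableSpace β] {X : Ω → β} {Z : Ω → ℝ}
    (hX : Measurable X) (hZ : AEMeasurable Z P) (hXZ : IndepFun X Z P) {S : Set β}
    (hS : MeasurableSet S) (hP : P.real (X ⁻¹' S) ≠ 0) : CE P Z (X ⁻¹' S) = Exp P Z := by
  have hsplit : ∫ ω in X ⁻¹' S, Z ω ∂P = P.real (X ⁻¹' S) * ∫ ω, Z ω ∂P :=
    ((IndepFun_iff_Indep _ _ _).1 hXZ).setIntegral_eq_mul (f := id) hX.comap_le hZ ⟨S, hS, rfl⟩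
      measurable_id.aestronglyMeasurable
  rw [CE_eq_setIntegral_div _ (hX hS), hsplit, mul_div_cancel_left₀ _ hP, Exp]

end Conditioning

section Decomposition

variable {D : Ω → ℕ} {A : Ω → Fin K → ℕ} {𝒜 : Finset (Fin K → ℕ)}

omit [MeasurableSpace Ω] in
lemma evDA_eq_preimage (d : ℕ) (a : Fin K → ℕ) :
    evDA D A d a = (fun ω => (D ω, A ω)) ⁻¹' {(d, a)} := by
  ext ω; simp [evDA]

omit [MeasurableSpace Ω] in
lemma evD_eq_biUnion_evDA (hAsupp : ∀ ω, A ω ∈ 𝒜) (d : ℕ) :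
    evD D d = ⋃ a ∈ 𝒜, evDA D A d a := by
  ext ω; simp [evD, evDA, hAsupp]

omit [MeasurableSpace Ω] in
lemma pairwiseDisjoint_evDA (d : ℕ) : (𝒜 : Set (Fin K → ℕ)).PairwiseDisjoint (evDA D A d) :=
  fun _ _ _ _ hab => Set.disjoint_left.mpr fun _ h h' => hab (h.2.symm.trans h'.2)

omit [MeasurableSpace Ω] in
lemma Yobs_eq_of_mem_evDA (Ypot : ℕ → (Fin K → ℕ) → Ω → ℝ) {d : ℕ} {a : Fin K → ℕ}
    (hd : d ∈ ({0, 1} : Finset ℕ)) (ha : a ∈ 𝒜) {ω : Ω} (hω : ω ∈ evDA D A d a) :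
    Yobs D A 𝒜 Ypot ω = Ypot d a ω := by
  obtain ⟨hDω, hAω⟩ := hω
  simp [Yobs, hDω, hAω, ite_and, hd, ha]

lemma measurableSet_evDA (hD : Measurable D) (hA : Measurable A) (d : ℕ) (a : Fin K → ℕ) :
    MeasurableSet (evDA D A d a) :=
  (hD (measurableSet_singleton d)).inter (hA (measurableSet_singleton a))

lemma measurableSet_evD (hD : Measurable D) (d : ℕ) : MeasurableSet (evD D d) :=
  hD (measurableSet_singleton d)

variable {P : Measure Ω}

lemma Pr_evD_eq_sum_Pr_evDA [IsFiniteMeasure P] (hD : Measurable D) (hA : Measurable A)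
    (hAsupp : ∀ ω, A ω ∈ 𝒜) (d : ℕ) : Pr P (evD D d) = ∑ a ∈ 𝒜, Pr P (evDA D A d a) := by
  rw [Pr_eq_measureReal, evD_eq_biUnion_evDA hAsupp,
    measureReal_biUnion_finset (pairwiseDisjoint_evDA d) fun a _ => measurableSet_evDA hD hA d a]
  rfl

lemma sum_piP_eq_one [IsFiniteMeasure P] (hD : Measurable D) (hA : Measurable A)
    (hAsupp : ∀ ω, A ω ∈ 𝒜) {d : ℕ} (hd : Pr P (evD D d) ≠ 0) : ∑ a ∈ 𝒜, piP P D A d a = 1 := by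
  unfold piP
  rw [← sum_div, ← Pr_evD_eq_sum_Pr_evDA hD hA hAsupp, div_self hd]

lemma CE_evDA_eq_Exp_of_indepFun (hD : Measurable D) (hA : Measurable A) {Z : Ω → ℝ}
    (hZ : AEMeasurable Z P) (hI : IndepFun (fun ω => (D ω, A ω)) Z P) {d : ℕ} {a : Fin K → ℕ}
    (hpos : Pr P (evDA D A d a) ≠ 0) : CE P Z (evDA D A d a) = Exp P Z := by
  rw [evDA_eq_preimage] at hpos ⊢
  exact CE_preimage_eq_Exp_of_indepFun (hD.prodMk hA) hZ hI (measurableSet_singleton _) hpos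

lemma CE_Yobs_evD_eq_sum_piP_mul_CE (hD : Measurable D) (hA : Measurable A)
    (hAsupp : ∀ ω, A ω ∈ 𝒜) (Ypot : ℕ → (Fin K → ℕ) → Ω → ℝ) {d : ℕ} (hd : d ∈ ({0, 1} : Finset ℕ))
    (hInt : ∀ a ∈ 𝒜, Integrable (Ypot d a) P) (hpos : ∀ a ∈ 𝒜, Pr P (evDA D A d a) ≠ 0) :
    CE P (Yobs D A 𝒜 Ypot) (evD D d)
      = ∑ a ∈ 𝒜, piP P D A d a * CE P (Ypot d a) (evDA D A d a) := by
  have hcell : ∀ a ∈ 𝒜, Set.EqOn (Yobs D A 𝒜 Ypot) (Ypot d a) (evDA D A d a) :=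
    fun a ha _ => Yobs_eq_of_mem_evDA Ypot hd ha
  have hsplit : ∫ ω in evD D d, Yobs D A 𝒜 Ypot ω ∂P
      = ∑ a ∈ 𝒜, ∫ ω in evDA D A d a, Ypot d a ω ∂P := by
    rw [evD_eq_biUnion_evDA hAsupp, integral_biUnion_finset _
      (fun a _ => measurableSet_evDA hD hA d a) (pairwiseDisjoint_evDA d)
      fun a ha => (hInt a ha).integrableOn.congr_fun (hcell a ha).symm
        (measurableSet_evDA hD hA d a)]
    exact sum_congr rfl fun a ha =>
      setIntegral_congr_fun (measurableSet_evDA hD hA d a) (hcell a ha)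
  rw [CE_eq_setIntegral_div _ (measurableSet_evD hD d), hsplit, sum_div]
  refine sum_congr rfl fun a ha => ?_
  rw [CE_eq_setIntegral_div _ (measurableSet_evDA hD hA d a), piP, Pr_eq_measureReal,
    Pr_eq_measureReal, div_mul_div_comm, mul_comm, mul_div_mul_right _ _ (show P.real _ ≠ 0 from hpos a ha)]

end Decomposition

theorem short_regression_under_strong_exogeneity_general
    (P : Measure Ω) [IsProbabilityMeasure P]
    (D : Ω → ℕ) (A : Ω → Fin K → ℕ) (𝒜 : Finset (Fin K → ℕ))
    (Ypot : ℕ → (Fin K → ℕ) → Ω → ℝ)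
    (hD : Measurable D) (hA : Measurable A)
    (hAsupp : ∀ ω, A ω ∈ 𝒜) (h𝒜0 : (0 : Fin K → ℕ) ∈ 𝒜)
    (hInt : ∀ d ∈ ({0, 1} : Finset ℕ), ∀ a ∈ 𝒜, Integrable (Ypot d a) P)
    (hpos : ∀ d ∈ ({0, 1} : Finset ℕ), ∀ a ∈ 𝒜, 0 < Pr P (evDA D A d a))
    (hIndep : ∀ d ∈ ({0, 1} : Finset ℕ), ∀ a ∈ 𝒜,
      IndepFun (fun ω => (D ω, A ω)) (Ypot d a) P)
    :
    (∑ a ∈ 𝒜, piP P D A 1 a *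
        (CE P (Ypot 0 a) (evDA D A 1 a) - CE P (Ypot 0 a) (evDA D A 0 a))) = 0
    ∧ (∑ a ∈ 𝒜, piP P D A 1 a * CE P (fun ω => Ypot 1 a ω - Ypot 0 a ω) (evDA D A 1 a))
        = ∑ a ∈ 𝒜, piP P D A 1 a * (muP P Ypot 1 a - muP P Ypot 0 a)
    ∧ (∑ a ∈ 𝒜, (piP P D A 1 a - piP P D A 0 a) *
        (CE P (Ypot 0 a) (evDA D A 0 a) - CE P (Ypot 0 0) (evDA D A 0 0)))
        = ∑ a ∈ 𝒜, (piP P D A 1 a - piP P D A 0 a) * (muP P Ypot 0 a - muP P Ypot 0 0)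
    ∧ CE P (Yobs D A 𝒜 Ypot) (evD D 1) - CE P (Yobs D A 𝒜 Ypot) (evD D 0)
        = (∑ a ∈ 𝒜, piP P D A 1 a * (muP P Ypot 1 a - muP P Ypot 0 a))
          + ∑ a ∈ 𝒜, (piP P D A 1 a - piP P D A 0 a) * (muP P Ypot 0 a - muP P Ypot 0 0) := by
  have h0 : (0 : ℕ) ∈ ({0, 1} : Finset ℕ) := by simp
  have h1 : (1 : ℕ) ∈ ({0, 1} : Finset ℕ) := by simp
  have hcell : ∀ d' ∈ ({0, 1} : Finset ℕ), ∀ d ∈ ({0, 1} : Finset ℕ), ∀ a ∈ 𝒜,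
      CE P (Ypot d' a) (evDA D A d a) = muP P Ypot d' a := fun d' hd' d hd a ha =>
    CE_evDA_eq_Exp_of_indepFun hD hA (hInt d' hd' a ha).aemeasurable (hIndep d' hd' a ha)
      (hpos d hd a ha).ne'
  have hPrD : ∀ d ∈ ({0, 1} : Finset ℕ), Pr P (evD D d) ≠ 0 := fun d hd =>
    ((hpos d hd 0 h𝒜0).trans_le (measureReal_mono fun _ h => h.1)).ne'
  have hCEY : ∀ d ∈ ({0, 1} : Finset ℕ),
      CE P (Yobs D A 𝒜 Ypot) (evD D d) = ∑ a ∈ 𝒜, piP P D A d a * muP P Ypot d a := by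
    intro d hd
    rw [CE_Yobs_evD_eq_sum_piP_mul_CE hD hA hAsupp Ypot hd (hInt d hd)
      fun a ha => (hpos d hd a ha).ne']
    exact sum_congr rfl fun a ha => by rw [hcell d hd d hd a ha]
  refine ⟨sum_eq_zero fun a ha => ?_, sum_congr rfl fun a ha => ?_,
    sum_congr rfl fun a ha => ?_, ?_⟩
  · rw [hcell 0 h0 1 h1 a ha, hcell 0 h0 0 h0 a ha, sub_self, mul_zero]
  · rw [CE_sub (hInt 1 h1 a ha) (hInt 0 h0 a ha) (measurableSet_evDA hD hA 1 a),
      hcell 1 h1 1 h1 a ha, hcell 0 h0 1 h1 a ha]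
  · rw [hcell 0 h0 0 h0 a ha, hcell 0 h0 0 h0 0 h𝒜0]
  · rw [hCEY 1 h1, hCEY 0 h0]
    exact sum_mul_sub_sum_mul_eq_add 𝒜 _ ((sum_piP_eq_one hD hA hAsupp (hPrD 1 h1)).trans
      (sum_piP_eq_one hD hA hAsupp (hPrD 0 h0)).symm)

/-- Under strong exogeneity, the three terms of the short-regression decomposition simplify:
the selection term vanishes, and Δ_short = Σ_a π₁(a)(μ(1,a)−μ(0,a)) + Σ_a (π₁(a)−π₀(a))(μ(0,a)−μ(0,0)). -/
theorem short_regression_under_strong_exogeneity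
    (P : Measure Ω) [IsProbabilityMeasure P]
    (D : Ω → ℕ) (A : Ω → Fin K → ℕ) (𝒜 : Finset (Fin K → ℕ))
    (Ypot : ℕ → (Fin K → ℕ) → Ω → ℝ)
    (hD : Measurable D) (hA : Measurable A)
    (hDbin : ∀ ω, D ω = 0 ∨ D ω = 1)
    (hAsupp : ∀ ω, A ω ∈ 𝒜) (h𝒜0 : (0 : Fin K → ℕ) ∈ 𝒜)
    (hInt : ∀ d ∈ ({0, 1} : Finset ℕ), ∀ a ∈ 𝒜, Integrable (Ypot d a) P)
    (hpos : ∀ d ∈ ({0, 1} : Finset ℕ), ∀ a ∈ 𝒜, 0 < Pr P (evDA D A d a))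
    (hIndep : ∀ d ∈ ({0, 1} : Finset ℕ), ∀ a ∈ 𝒜,
      IndepFun (fun ω => (D ω, A ω)) (Ypot d a) P)
    :
    (∑ a ∈ 𝒜, piP P D A 1 a *
        (CE P (Ypot 0 a) (evDA D A 1 a) - CE P (Ypot 0 a) (evDA D A 0 a))) = 0
    ∧ (∑ a ∈ 𝒜, piP P D A 1 a * CE P (fun ω => Ypot 1 a ω - Ypot 0 a ω) (evDA D A 1 a))
        = ∑ a ∈ 𝒜, piP P D A 1 a * (muP P Ypot 1 a - muP P Ypot 0 a)
    ∧ (∑ a ∈ 𝒜, (piP P D A 1 a - piP P D A 0 a) *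
        (CE P (Ypot 0 a) (evDA D A 0 a) - CE P (Ypot 0 0) (evDA D A 0 0)))
        = ∑ a ∈ 𝒜, (piP P D A 1 a - piP P D A 0 a) * (muP P Ypot 0 a - muP P Ypot 0 0)
    ∧ CE P (Yobs D A 𝒜 Ypot) (evD D 1) - CE P (Yobs D A 𝒜 Ypot) (evD D 0)
        = (∑ a ∈ 𝒜, piP P D A 1 a * (muP P Ypot 1 a - muP P Ypot 0 a))
          + ∑ a ∈ 𝒜, (piP P D A 1 a - piP P D A 0 a) * (muP P Ypot 0 a - muP P Ypot 0 0) :=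
  short_regression_under_strong_exogeneity_general P D A 𝒜 Ypot hD hA hAsupp h𝒜0 hInt hpos hIndep
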